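/- arXiv:math-ph/0605058 — 2 statements merged into one kernel-verified Lean document; each statement's English description precedes it below -/
import Mathlib

section
/- Let Z(x; y₁,…,y_M) = (∏_{K=1}^M (y_K−x)^{ρ_K/κ}) · (∏_{1≤J<K≤M} (y_J−y_K)^{ρ_J ρ_K/(2κ)}), defined on the domain where all the bases are positive. Then Z satisfies D^(x) Z = 0, where D^(x) = (κ/2)∂ₓ² + Σ_K ( (2/(y_K−x))∂_{y_K} − 2δ_K/(y_K−x)² ) and δ_K = ρ_K(ρ_K+4−κ)/(4κ). -/
open scoped BigOperators

open Filter
set_option maxHeartbeats 1000000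

lemma prod_rpow_eq_exp' {M : ℕ} (f e : Fin M → ℝ) (hf : ∀ i, 0 < f i) :
    ∏ i, f i ^ e i = Real.exp (∑ i, Real.log (f i) * e i) := by
  rw [Real.exp_sum]
  exact Finset.prod_congr rfl fun i _ => Real.rpow_def_of_pos (hf i) _

lemma double_sum_symm' {M : ℕ} (f : Fin M → Fin M → ℝ) (hf : ∀ i j, f i j = f j i) :
    ∑ i, ∑ j, f i j = (∑ i, f i i) + 2 * ∑ i, ∑ j, (if i < j then f i j else 0) := by
  have h1 : ∀ i j : Fin M, f i j =
      (if i < j then f i j else 0) + (if j < i then f i j else 0) +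
        (if i = j then f i j else 0) := by
    intro i j
    rcases lt_trichotomy i j with h | h | h
    · simp [h, lt_asymm h, ne_of_lt h]
    · simp [h, lt_irrefl]
    · simp [h, lt_asymm h, (ne_of_lt h).symm]
  have h2 : ∑ i : Fin M, ∑ j : Fin M, f i j =
      (∑ i : Fin M, ∑ j : Fin M, if i < j then f i j else 0) +
      (∑ i : Fin M, ∑ j : Fin M, if j < i then f i j else 0) +
      (∑ i : Fin M, ∑ j : Fin M, if i = j then f i j else 0) := by
    rw [← Finset.sum_add_distrib, ← Finset.sum_add_distrib]
    refine Finset.sum_congr rfl fun i _ => ?_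
    rw [← Finset.sum_add_distrib, ← Finset.sum_add_distrib]
    exact Finset.sum_congr rfl fun j _ => h1 i j
  have h3 : (∑ i : Fin M, ∑ j : Fin M, if j < i then f i j else 0)
      = ∑ i : Fin M, ∑ j : Fin M, if i < j then f i j else 0 := by
    rw [Finset.sum_comm]
    exact Finset.sum_congr rfl fun i _ => Finset.sum_congr rfl fun j _ => by rw [hf]
  have h4 : (∑ i : Fin M, ∑ j : Fin M, if i = j then f i j else 0) = ∑ i, f i i := by
    refine Finset.sum_congr rfl fun i _ => ?_
    rw [Finset.sum_ite_eq]
    simp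
  rw [h2, h3, h4]; ring

lemma hasDerivAt_prod_rpow' {M : ℕ} (y e : Fin M → ℝ) (t : ℝ) (ht : ∀ K, t < y K) :
    HasDerivAt (fun s => ∏ K, (y K - s) ^ e K)
      (-((∏ K, (y K - t) ^ e K) * ∑ K, e K * (y K - t)⁻¹)) t := by
  have htK : ∀ K, 0 < y K - t := fun K => sub_pos.2 (ht K)
  have hL : HasDerivAt (fun s => ∑ K, Real.log (y K - s) * e K)
      (∑ K, -1 / (y K - t) * e K) t :=
    HasDerivAt.fun_sum (𝕜 := ℝ) (F := ℝ) fun K _ =>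
      (((hasDerivAt_id t).const_sub (y K)).log (htK K).ne').mul_const (e K)
  have hev : ∀ᶠ s in nhds t, ∀ K, s < y K := by
    rw [Filter.eventually_all]; exact fun K => eventually_lt_nhds (ht K)
  have heq : (fun s => ∏ K, (y K - s) ^ e K) =ᶠ[nhds t]
      fun s => Real.exp (∑ K, Real.log (y K - s) * e K) := by
    filter_upwards [hev] with s hs
    exact prod_rpow_eq_exp' _ _ fun K => sub_pos.2 (hs K)
  have h2 := (hL.exp).congr_of_eventuallyEq heq
  refine h2.congr_deriv (Eq.symm ?_)
  rw [← prod_rpow_eq_exp' _ _ htK]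
  rw [Finset.mul_sum, Finset.mul_sum, ← Finset.sum_neg_distrib]
  exact Finset.sum_congr rfl fun K _ => by ring

lemma hasDerivAt_S' {M : ℕ} (y e : Fin M → ℝ) (t : ℝ) (ht : ∀ K, t < y K) :
    HasDerivAt (fun s => ∑ K, e K * (y K - s)⁻¹) (∑ K, e K * ((y K - t)⁻¹) ^ 2) t := by
  refine HasDerivAt.fun_sum (𝕜 := ℝ) (F := ℝ) fun K _ => ?_
  have hne : y K - t ≠ 0 := (sub_pos.2 (ht K)).ne'
  have h := HasDerivAt.const_mul (e K) (((hasDerivAt_id t).const_sub (y K)).inv hne)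
  refine h.congr_deriv (Eq.symm ?_)
  simp only [id]
  field_simp

lemma deriv2_prod_rpow' {M : ℕ} (y e : Fin M → ℝ) (c x : ℝ) (hx : ∀ K, x < y K) :
    deriv (fun t => deriv (fun s => (∏ K, (y K - s) ^ e K) * c) t) x
      = ((∏ K, (y K - x) ^ e K) *
          ((∑ K, e K * (y K - x)⁻¹) ^ 2 - ∑ K, e K * ((y K - x)⁻¹) ^ 2)) * c := by
  have hev : ∀ᶠ t in nhds x, ∀ K, t < y K := by
    rw [Filter.eventually_all]; exact fun K => eventually_lt_nhds (hx K)
  have heq : deriv (fun s => (∏ K, (y K - s) ^ e K) * c) =ᶠ[nhds x]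
      fun t => -((∏ K, (y K - t) ^ e K) * ∑ K, e K * (y K - t)⁻¹) * c := by
    filter_upwards [hev] with t ht
    exact ((hasDerivAt_prod_rpow' y e t ht).mul_const c).deriv
  rw [heq.deriv_eq]
  have h1 := hasDerivAt_prod_rpow' y e x hx
  have h2 := hasDerivAt_S' y e x hx
  have h3 : HasDerivAt (fun t => -((∏ K, (y K - t) ^ e K) * ∑ K, e K * (y K - t)⁻¹) * c)
      (-((-((∏ K, (y K - x) ^ e K) * ∑ K, e K * (y K - x)⁻¹)) * (∑ K, e K * (y K - x)⁻¹)
         + (∏ K, (y K - x) ^ e K) * (∑ K, e K * ((y K - x)⁻¹) ^ 2)) * c) x :=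
    ((h1.mul h2).neg).mul_const c
  rw [h3.deriv]
  ring

lemma hasDerivAt_update' {M : ℕ} (y : Fin M → ℝ) (x : ℝ) (e : Fin M → ℝ)
    (b : Fin M → Fin M → ℝ) (K : Fin M)
    (hx : ∀ J, x < y J) (hy : ∀ J L : Fin M, J < L → y L < y J) :
    HasDerivAt (fun t => (∏ J, (Function.update y K t J - x) ^ e J) *
        ∏ J, ∏ L, if J < L then (Function.update y K t J - Function.update y K t L) ^ b J L else 1)
      (((∏ J, (y J - x) ^ e J) * ∏ J, ∏ L, if J < L then (y J - y L) ^ b J L else 1) *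
        ((y K - x)⁻¹ * e K +
         ∑ J, ∑ L, if J < L then
           ((if J = K then (1:ℝ) else 0) - (if L = K then 1 else 0)) * (y J - y L)⁻¹ * b J L
         else 0))
      (y K) := by
  have hself : Function.update y K (y K) = y := Function.update_eq_self K y
  have hQ : ∀ᶠ t in nhds (y K),
      x < t ∧ (∀ J, J < K → t < y J) ∧ (∀ L, K < L → y L < t) := by
    refine (eventually_gt_nhds (hx K)).and (Filter.Eventually.and ?_ ?_)
    · rw [Filter.eventually_all]
      intro J
      by_cases hJ : J < K
      · exact (eventually_lt_nhds (hy J K hJ)).mono fun t ht _ => ht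
      · exact Filter.Eventually.of_forall fun t ht => absurd ht hJ
    · rw [Filter.eventually_all]
      intro L
      by_cases hL : K < L
      · exact (eventually_gt_nhds (hy K L hL)).mono fun t ht _ => ht
      · exact Filter.Eventually.of_forall fun t ht => absurd ht hL
  set H : ℝ → ℝ := fun t =>
    (∑ J, Real.log (Function.update y K t J - x) * e J) +
    ∑ J, ∑ L, if J < L then
      Real.log (Function.update y K t J - Function.update y K t L) * b J L else 0 with hHdef
  have heq : (fun t => (∏ J, (Function.update y K t J - x) ^ e J) *
      ∏ J, ∏ L, if J < L then (Function.update y K t J - Function.update y K t L) ^ b J L else 1)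
      =ᶠ[nhds (y K)] fun t => Real.exp (H t) := by
    filter_upwards [hQ] with t ht
    obtain ⟨ht1, ht2, ht3⟩ := ht
    have hb1 : ∀ J, 0 < Function.update y K t J - x := by
      intro J
      rw [Function.update_apply]
      split_ifs with h
      · exact sub_pos.2 ht1
      · exact sub_pos.2 (hx J)
    have hb2 : ∀ J L : Fin M, J < L → 0 < Function.update y K t J - Function.update y K t L := by
      intro J L hJL
      rw [Function.update_apply, Function.update_apply]
      split_ifs with h1 h2 h2
      · exact absurd (h1.trans h2.symm) (ne_of_lt hJL)
      · exact sub_pos.2 (ht3 L (h1 ▸ hJL))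
      · exact sub_pos.2 (ht2 J (h2 ▸ hJL))
      · exact sub_pos.2 (hy J L hJL)
    have hfst : (∏ J, (Function.update y K t J - x) ^ e J)
        = Real.exp (∑ J, Real.log (Function.update y K t J - x) * e J) :=
      prod_rpow_eq_exp' _ _ hb1
    have hsnd : (∏ J, ∏ L, if J < L then
          (Function.update y K t J - Function.update y K t L) ^ b J L else 1)
        = Real.exp (∑ J, ∑ L, if J < L then
            Real.log (Function.update y K t J - Function.update y K t L) * b J L else 0) := by
      rw [Real.exp_sum]
      refine Finset.prod_congr rfl fun J _ => ?_
      rw [Real.exp_sum]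
      refine Finset.prod_congr rfl fun L _ => ?_
      split_ifs with h
      · exact Real.rpow_def_of_pos (hb2 J L h) _
      · exact Real.exp_zero.symm
    rw [hfst, hsnd, ← Real.exp_add]
  have hup : ∀ J : Fin M, HasDerivAt (fun t => Function.update y K t J)
      (if J = K then (1:ℝ) else 0) (y K) := by
    intro J
    simp only [Function.update_apply]
    split_ifs with h
    · exact hasDerivAt_id _
    · exact hasDerivAt_const _ _
  have hsum1 : HasDerivAt (fun t => ∑ J, Real.log (Function.update y K t J - x) * e J)
      ((y K - x)⁻¹ * e K) (y K) := by
    have h : HasDerivAt (fun t => ∑ J, Real.log (Function.update y K t J - x) * e J)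
        (∑ J, (if J = K then (1:ℝ) else 0) / (Function.update y K (y K) J - x) * e J) (y K) := by
      refine HasDerivAt.fun_sum (𝕜 := ℝ) (F := ℝ) fun J _ => ?_
      have hne : Function.update y K (y K) J - x ≠ 0 := by
        rw [hself]; exact (sub_pos.2 (hx J)).ne'
      exact (((hup J).sub_const x).log hne).mul_const (e J)
    convert h using 1
    rw [hself]
    have hterm : ∀ J : Fin M, (if J = K then (1:ℝ) else 0) / (y J - x) * e J
        = if J = K then (y K - x)⁻¹ * e K else 0 := by
      intro J
      split_ifs with h
      · subst h; rw [one_div]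
      · simp
    rw [Finset.sum_congr rfl fun J _ => hterm J, Finset.sum_ite_eq']
    simp
  have hsum2 : HasDerivAt (fun t => ∑ J, ∑ L, if J < L then
        Real.log (Function.update y K t J - Function.update y K t L) * b J L else 0)
      (∑ J, ∑ L, if J < L then
        ((if J = K then (1:ℝ) else 0) - (if L = K then 1 else 0)) * (y J - y L)⁻¹ * b J L
       else 0) (y K) := by
    refine HasDerivAt.fun_sum (𝕜 := ℝ) (F := ℝ) fun J _ => HasDerivAt.fun_sum (𝕜 := ℝ) (F := ℝ) fun L _ => ?_
    by_cases hJL : J < L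
    · simp only [if_pos hJL]
      have hne : Function.update y K (y K) J - Function.update y K (y K) L ≠ 0 := by
        rw [hself]; exact (sub_pos.2 (hy J L hJL)).ne'
      have h := ((((hup J).sub (hup L)).log hne)).mul_const (b J L)
      refine h.congr_deriv (Eq.symm ?_)
      simp only [Pi.sub_apply]
      rw [hself, div_eq_mul_inv]
    · simp only [if_neg hJL]
      exact hasDerivAt_const _ _
  have hH : HasDerivAt H ((y K - x)⁻¹ * e K +
      ∑ J, ∑ L, if J < L then
        ((if J = K then (1:ℝ) else 0) - (if L = K then 1 else 0)) * (y J - y L)⁻¹ * b J L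
      else 0) (y K) := hsum1.add hsum2
  have hmain := (hH.exp).congr_of_eventuallyEq heq
  have hval : Real.exp (H (y K))
      = (∏ J, (y J - x) ^ e J) * ∏ J, ∏ L, if J < L then (y J - y L) ^ b J L else 1 := by
    rw [← heq.eq_of_nhds]
    simp only [hself]
  rw [hval] at hmain
  exact hmain


/-- The partition function of `SLE_κ(ρ₁,…,ρ_M)`,
`Z(x; y₁,…,y_M) = (∏_K (y_K−x)^(ρ_K/κ)) · (∏_{J<K} (y_J−y_K)^(ρ_J ρ_K/(2κ)))`,
satisfies the null field equation
`(κ/2)∂ₓ²Z + Σ_K ((2/(y_K−x))∂_{y_K}Z − (2δ_K/(y_K−x)²)Z) = 0`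
on the domain where all bases are positive, where `δ_K = ρ_K(ρ_K+4−κ)/(4κ)`. -/
theorem null_field_equation_sle_kappa_rho (κ : ℝ) (hκ : 0 < κ)
    (M : ℕ) (hM : 1 ≤ M) (ρ : Fin M → ℝ)
    (δ : Fin M → ℝ) (hδ : ∀ K, δ K = ρ K * (ρ K + 4 - κ) / (4 * κ))
    (Z : ℝ → (Fin M → ℝ) → ℝ)
    (hZ : ∀ (x : ℝ) (y : Fin M → ℝ),
      Z x y = (∏ K, (y K - x) ^ (ρ K / κ)) *
        ∏ J, ∏ K, if J < K then (y J - y K) ^ (ρ J * ρ K / (2 * κ)) else 1) :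
    ∀ (x : ℝ) (y : Fin M → ℝ),
      (∀ K, x < y K) → (∀ J K : Fin M, J < K → y K < y J) →
      κ / 2 * deriv (fun x' => deriv (fun x'' => Z x'' y) x') x
        + ∑ K, (2 / (y K - x) * deriv (fun t => Z x (Function.update y K t)) (y K)
            - 2 * δ K / (y K - x) ^ 2 * Z x y) = 0 := by
  intro x y hx hy
  have hκ0 : κ ≠ 0 := ne_of_gt hκ
  have hyx : ∀ K, (0:ℝ) < y K - x := fun K => sub_pos.2 (hx K)
  -- second derivative in x
  have hF : (fun x'' => Z x'' y) = fun t => (∏ K, (y K - t) ^ (ρ K / κ)) *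
      ∏ J, ∏ L, if J < L then (y J - y L) ^ (ρ J * ρ L / (2 * κ)) else 1 :=
    funext fun t => hZ t y
  have hd2 : deriv (fun x' => deriv (fun x'' => Z x'' y) x') x
      = ((∏ K, (y K - x) ^ (ρ K / κ)) *
          ((∑ K, ρ K / κ * (y K - x)⁻¹) ^ 2 - ∑ K, ρ K / κ * ((y K - x)⁻¹) ^ 2)) *
        (∏ J, ∏ L, if J < L then (y J - y L) ^ (ρ J * ρ L / (2 * κ)) else 1) := by
    rw [hF]
    exact deriv2_prod_rpow' y (fun K => ρ K / κ) _ x hx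
  -- first derivatives in the y variables
  have hg : ∀ K : Fin M, deriv (fun t => Z x (Function.update y K t)) (y K)
      = Z x y * ((y K - x)⁻¹ * (ρ K / κ) +
          ∑ J, ∑ L, if J < L then
            ((if J = K then (1:ℝ) else 0) - (if L = K then 1 else 0)) * (y J - y L)⁻¹ *
              (ρ J * ρ L / (2 * κ)) else 0) := by
    intro K
    have hgf : (fun t => Z x (Function.update y K t)) = fun t =>
        (∏ J, (Function.update y K t J - x) ^ (ρ J / κ)) *
        ∏ J, ∏ L, if J < L then
          (Function.update y K t J - Function.update y K t L) ^ (ρ J * ρ L / (2 * κ)) else 1 :=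
      funext fun t => hZ x (Function.update y K t)
    rw [hgf, (hasDerivAt_update' y x (fun J => ρ J / κ)
        (fun J L => ρ J * ρ L / (2 * κ)) K hx hy).deriv, hZ x y]
  -- rewrite the sum
  have hrw : ∀ K : Fin M, 2 / (y K - x) * deriv (fun t => Z x (Function.update y K t)) (y K)
      - 2 * δ K / (y K - x) ^ 2 * Z x y
      = Z x y * (2 * ((y K - x)⁻¹) ^ 2 * (ρ K / κ) - 2 * δ K * ((y K - x)⁻¹) ^ 2
          + 2 * ((y K - x)⁻¹ *
            ∑ J, ∑ L, if J < L then
              ((if J = K then (1:ℝ) else 0) - (if L = K then 1 else 0)) * (y J - y L)⁻¹ *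
                (ρ J * ρ L / (2 * κ)) else 0)) := by
    intro K
    rw [hg K]
    have h1 : y K - x ≠ 0 := (hyx K).ne'
    field_simp
    ring
  rw [hd2, Finset.sum_congr rfl fun K _ => hrw K, ← Finset.mul_sum]
  -- the scalar null-field identity
  have hkey : κ / 2 * ((∑ K, ρ K / κ * (y K - x)⁻¹) ^ 2 - ∑ K, ρ K / κ * ((y K - x)⁻¹) ^ 2)
      + ∑ K, (2 * ((y K - x)⁻¹) ^ 2 * (ρ K / κ) - 2 * δ K * ((y K - x)⁻¹) ^ 2
          + 2 * ((y K - x)⁻¹ *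
            ∑ J, ∑ L, if J < L then
              ((if J = K then (1:ℝ) else 0) - (if L = K then 1 else 0)) * (y J - y L)⁻¹ *
                (ρ J * ρ L / (2 * κ)) else 0)) = 0 := by
    have hWs : ∑ K, ((y K - x)⁻¹ *
          ∑ J, ∑ L, if J < L then
            ((if J = K then (1:ℝ) else 0) - (if L = K then 1 else 0)) * (y J - y L)⁻¹ *
              (ρ J * ρ L / (2 * κ)) else 0)
        = -∑ J, ∑ L, (if J < L then
            (ρ J * ρ L / (2 * κ)) * ((y J - x)⁻¹ * (y L - x)⁻¹) else 0) := by
      simp_rw [Finset.mul_sum]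
      rw [Finset.sum_comm, ← Finset.sum_neg_distrib]
      refine Finset.sum_congr rfl fun J _ => ?_
      rw [Finset.sum_comm, ← Finset.sum_neg_distrib]
      refine Finset.sum_congr rfl fun L _ => ?_
      by_cases hJL : J < L
      · simp only [if_pos hJL]
        have hterm : ∀ Kk : Fin M, (y Kk - x)⁻¹ *
            (((if J = Kk then (1:ℝ) else 0) - (if L = Kk then 1 else 0)) * (y J - y L)⁻¹ *
              (ρ J * ρ L / (2 * κ)))
            = (if J = Kk then (y Kk - x)⁻¹ * ((y J - y L)⁻¹ * (ρ J * ρ L / (2 * κ))) else 0)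
              - (if L = Kk then (y Kk - x)⁻¹ * ((y J - y L)⁻¹ * (ρ J * ρ L / (2 * κ))) else 0) := by
          intro Kk
          split_ifs with h1 h2 h2 <;> ring
        rw [Finset.sum_congr rfl fun Kk _ => hterm Kk, Finset.sum_sub_distrib,
            Finset.sum_ite_eq, Finset.sum_ite_eq]
        simp only [Finset.mem_univ, if_true]
        have h1 : y J - y L ≠ 0 := (sub_pos.2 (hy J L hJL)).ne'
        have h2 : y J - x ≠ 0 := (hyx J).ne'
        have h3 : y L - x ≠ 0 := (hyx L).ne'
        field_simp
        ring
      · simp [hJL]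
    have hsq : (∑ K, ρ K / κ * (y K - x)⁻¹) ^ 2
        = (∑ K, (ρ K / κ * (y K - x)⁻¹) * (ρ K / κ * (y K - x)⁻¹))
          + 2 * ∑ J, ∑ L, (if J < L then
              (ρ J / κ * (y J - x)⁻¹) * (ρ L / κ * (y L - x)⁻¹) else 0) := by
      rw [pow_two, Finset.sum_mul_sum]
      exact double_sum_symm' _ fun i j => by ring
    rw [hsq, Finset.sum_add_distrib, ← Finset.mul_sum, hWs]
    have hI : κ / 2 * (∑ K, (ρ K / κ * (y K - x)⁻¹) * (ρ K / κ * (y K - x)⁻¹))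
        - κ / 2 * (∑ K, ρ K / κ * ((y K - x)⁻¹) ^ 2)
        + ∑ K, (2 * ((y K - x)⁻¹) ^ 2 * (ρ K / κ) - 2 * δ K * ((y K - x)⁻¹) ^ 2) = 0 := by
      rw [Finset.mul_sum, Finset.mul_sum, ← Finset.sum_sub_distrib, ← Finset.sum_add_distrib]
      refine Finset.sum_eq_zero fun K _ => ?_
      have hK : y K - x ≠ 0 := (hyx K).ne'
      rw [hδ K]
      field_simp
      ring
    have hII : κ * (∑ J, ∑ L, (if J < L then
          (ρ J / κ * (y J - x)⁻¹) * (ρ L / κ * (y L - x)⁻¹) else 0))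
        - 2 * (∑ J, ∑ L, (if J < L then
          (ρ J * ρ L / (2 * κ)) * ((y J - x)⁻¹ * (y L - x)⁻¹) else 0)) = 0 := by
      rw [Finset.mul_sum, Finset.mul_sum, ← Finset.sum_sub_distrib]
      refine Finset.sum_eq_zero fun J _ => ?_
      rw [Finset.mul_sum, Finset.mul_sum, ← Finset.sum_sub_distrib]
      refine Finset.sum_eq_zero fun L _ => ?_
      split_ifs with h
      · have hJx : y J - x ≠ 0 := (hyx J).ne'
        have hLx : y L - x ≠ 0 := (hyx L).ne'
        field_simp
        ring
      · ring
    linear_combination hI + hII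
  linear_combination Z x y * hkey
    - κ / 2 * ((∑ K, ρ K / κ * (y K - x)⁻¹) ^ 2 - ∑ K, ρ K / κ * ((y K - x)⁻¹) ^ 2) * hZ x y
end

section
/- The function Z̃*(ũ,ỹ,w̃) = (ỹ−ũ)^{−2/κ*} (w̃−ũ)^{(4−κ*)/κ*} (w̃−ỹ)^{(κ*−4)/κ*}, defined for ũ < ỹ < w̃, satisfies the null field equation (κ*/2)∂²Z̃*/∂ỹ² + (2/(ũ−ỹ))∂Z̃*/∂ũ + (2/(w̃−ỹ))∂Z̃*/∂w̃ − (2δ_ũ/(ũ−ỹ)²)Z̃* − (2δ_w̃/(w̃−ỹ)²)Z̃* = 0, where δ_ũ = (κ*−2)/(2κ*) and δ_w̃ = 0. -/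
/-- The partition function
`Z̃*(ũ,ỹ,w̃) = (ỹ−ũ)^(−2/κ*) (w̃−ũ)^((4−κ*)/κ*) (w̃−ỹ)^((κ*−4)/κ*)` of the glued
`SLE_{κ*}(−2, κ*−4)` process satisfies the null field equation
`(κ*/2)∂_ỹ²Z̃* + (2/(ũ−ỹ))∂_ũZ̃* + (2/(w̃−ỹ))∂_w̃Z̃* − (2δ_ũ/(ũ−ỹ)²)Z̃* − (2δ_w̃/(w̃−ỹ)²)Z̃* = 0`
on `{ũ < ỹ < w̃}`, where `δ_ũ = (κ*−2)/(2κ*)` and `δ_w̃ = 0`. -/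
theorem glued_null_field_equation (κs : ℝ) (hκs : 0 < κs)
    (Z : ℝ → ℝ → ℝ → ℝ)
    (hZ : ∀ u y w : ℝ,
      Z u y w = (y - u) ^ (-2 / κs) * (w - u) ^ ((4 - κs) / κs) * (w - y) ^ ((κs - 4) / κs))
    (δu δw : ℝ) (hδu : δu = (κs - 2) / (2 * κs)) (hδw : δw = 0) :
    ∀ u y w : ℝ, u < y → y < w →
      κs / 2 * deriv (fun y' => deriv (fun y'' => Z u y'' w) y') y
        + 2 / (u - y) * deriv (fun u' => Z u' y w) u
        + 2 / (w - y) * deriv (fun w' => Z u y w') w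
        - 2 * δu / (u - y) ^ 2 * Z u y w
        - 2 * δw / (w - y) ^ 2 * Z u y w = 0 := by
  subst hδu hδw
  intro u y w huy hyw
  have hX : (0:ℝ) < y - u := by linarith
  have hW : (0:ℝ) < w - y := by linarith
  have hU : (0:ℝ) < w - u := by linarith
  set a : ℝ := -2 / κs with ha
  set b : ℝ := (4 - κs) / κs with hb
  set c : ℝ := (κs - 4) / κs with hc
  -- generic derivative helpers
  have HA : ∀ (p : ℝ) (y' : ℝ), u < y' →
      HasDerivAt (fun t : ℝ => (t - u) ^ p) (p * (y' - u) ^ (p - 1)) y' := by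
    intro p y' h
    have := ((hasDerivAt_id y').sub_const u).rpow_const (p := p)
      (Or.inl (by simp only [id_eq]; intro hh; nlinarith [sub_pos.2 h]))
    simpa using this
  have HB : ∀ (p : ℝ) (y' : ℝ), y' < w →
      HasDerivAt (fun t : ℝ => (w - t) ^ p) (-(p * (w - y') ^ (p - 1))) y' := by
    intro p y' h
    have := ((hasDerivAt_const y' w).sub (hasDerivAt_id y')).rpow_const (p := p)
      (Or.inl (by simp only [Pi.sub_apply, id_eq]; intro hh; nlinarith [sub_pos.2 h]))
    simpa using this
  have HC : ∀ (p : ℝ) (u' : ℝ), u' < y →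
      HasDerivAt (fun t : ℝ => (y - t) ^ p) (-(p * (y - u') ^ (p - 1))) u' := by
    intro p u' h
    have := ((hasDerivAt_const u' y).sub (hasDerivAt_id u')).rpow_const (p := p)
      (Or.inl (by simp only [Pi.sub_apply, id_eq]; intro hh; nlinarith [sub_pos.2 h]))
    simpa using this
  have HD : ∀ (p : ℝ) (u' : ℝ), u' < w →
      HasDerivAt (fun t : ℝ => (w - t) ^ p) (-(p * (w - u') ^ (p - 1))) u' := by
    intro p u' h
    have := ((hasDerivAt_const u' w).sub (hasDerivAt_id u')).rpow_const (p := p)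
      (Or.inl (by simp only [Pi.sub_apply, id_eq]; intro hh; nlinarith [sub_pos.2 h]))
    simpa using this
  have HE : ∀ (p : ℝ) (w' : ℝ), u < w' →
      HasDerivAt (fun t : ℝ => (t - u) ^ p) (p * (w' - u) ^ (p - 1)) w' := by
    intro p w' h
    have := ((hasDerivAt_id w').sub_const u).rpow_const (p := p)
      (Or.inl (by simp only [id_eq]; intro hh; nlinarith [sub_pos.2 h]))
    simpa using this
  have HF : ∀ (p : ℝ) (w' : ℝ), y < w' →
      HasDerivAt (fun t : ℝ => (t - y) ^ p) (p * (w' - y) ^ (p - 1)) w' := by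
    intro p w' h
    have := ((hasDerivAt_id w').sub_const y).rpow_const (p := p)
      (Or.inl (by simp only [id_eq]; intro hh; nlinarith [sub_pos.2 h]))
    simpa using this
  -- derivative in u
  have hdu : deriv (fun u' => Z u' y w) u
      = (-(a * (y - u) ^ (a - 1)) * (w - u) ^ b
          + (y - u) ^ a * (-(b * (w - u) ^ (b - 1)))) * (w - y) ^ c := by
    have hfun : (fun u' => Z u' y w)
        = fun u' => (y - u') ^ a * (w - u') ^ b * (w - y) ^ c := funext fun u' => hZ u' y w
    rw [hfun]
    exact (((HC a u huy).mul (HD b u (by linarith))).mul_const _).deriv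
  -- derivative in w
  have hdw : deriv (fun w' => Z u y w') w
      = ((y - u) ^ a * (b * (w - u) ^ (b - 1))) * (w - y) ^ c
          + ((y - u) ^ a * (w - u) ^ b) * (c * (w - y) ^ (c - 1)) := by
    have hfun : (fun w' => Z u y w')
        = fun w' => (y - u) ^ a * (w' - u) ^ b * (w' - y) ^ c := funext fun w' => hZ u y w'
    rw [hfun]
    exact ((((HE b w (by linarith)).const_mul ((y - u) ^ a)).mul (HF c w hyw)).deriv)
  -- first derivative in y, on the whole interval
  have hkey : ∀ y', u < y' → y' < w →
      HasDerivAt (fun y'' => Z u y'' w)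
        (a * (y' - u) ^ (a - 1) * ((w - u) ^ b * (w - y') ^ c)
          - c * ((y' - u) ^ a * (w - u) ^ b) * (w - y') ^ (c - 1)) y' := by
    intro y' h1 h2
    have hfun : (fun y'' => Z u y'' w)
        = fun y'' => (y'' - u) ^ a * (w - u) ^ b * (w - y'') ^ c := funext fun t => hZ u t w
    rw [hfun]
    have := (((HA a y' h1).mul_const ((w - u) ^ b)).mul (HB c y' h2))
    refine this.congr_deriv ?_
    ring
  have hD1 : deriv (fun y' => deriv (fun y'' => Z u y'' w) y') y
      = deriv (fun y' => a * (y' - u) ^ (a - 1) * ((w - u) ^ b * (w - y') ^ c)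
          - c * ((y' - u) ^ a * (w - u) ^ b) * (w - y') ^ (c - 1)) y := by
    apply Filter.EventuallyEq.deriv_eq
    filter_upwards [Ioo_mem_nhds huy hyw] with y' hy'
    exact (hkey y' hy'.1 hy'.2).deriv
  -- second derivative in y
  have hdy2 : deriv (fun y' => deriv (fun y'' => Z u y'' w) y') y
      = (a * (a - 1) * (y - u) ^ (a - 1 - 1)) * ((w - u) ^ b * (w - y) ^ c)
          + (a * (y - u) ^ (a - 1)) * ((w - u) ^ b * (-(c * (w - y) ^ (c - 1))))
          - ((c * (a * (y - u) ^ (a - 1)) * (w - u) ^ b) * (w - y) ^ (c - 1)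
            + (c * ((y - u) ^ a * (w - u) ^ b)) * (-((c - 1) * (w - y) ^ (c - 1 - 1)))) := by
    rw [hD1]
    have t1 : HasDerivAt (fun y' : ℝ => a * (y' - u) ^ (a - 1) * ((w - u) ^ b * (w - y') ^ c))
        ((a * ((a - 1) * (y - u) ^ (a - 1 - 1))) * ((w - u) ^ b * (w - y) ^ c)
          + (a * (y - u) ^ (a - 1)) * ((w - u) ^ b * (-(c * (w - y) ^ (c - 1))))) y :=
      (((HA (a - 1) y huy).const_mul a).mul ((HB c y hyw).const_mul ((w - u) ^ b)))
    have t2 : HasDerivAt (fun y' : ℝ =>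
          c * ((y' - u) ^ a * (w - u) ^ b) * (w - y') ^ (c - 1))
        ((c * ((a * (y - u) ^ (a - 1)) * (w - u) ^ b)) * (w - y) ^ (c - 1)
          + (c * ((y - u) ^ a * (w - u) ^ b)) * (-((c - 1) * (w - y) ^ (c - 1 - 1)))) y :=
      ((((HA a y huy).mul_const ((w - u) ^ b)).const_mul c).mul (HB (c - 1) y hyw))
    have := (t1.sub t2).deriv
    refine this.trans ?_
    ring
  -- transform shifted powers into base powers
  have e1 : (y - u) ^ (a - 1) = (y - u) ^ a / (y - u) := Real.rpow_sub_one hX.ne' a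
  have e2 : (y - u) ^ (a - 1 - 1) = (y - u) ^ a / (y - u) / (y - u) := by
    rw [Real.rpow_sub_one hX.ne', e1]
  have e3 : (w - y) ^ (c - 1) = (w - y) ^ c / (w - y) := Real.rpow_sub_one hW.ne' c
  have e4 : (w - y) ^ (c - 1 - 1) = (w - y) ^ c / (w - y) / (w - y) := by
    rw [Real.rpow_sub_one hW.ne', e3]
  have e5 : (w - u) ^ (b - 1) = (w - u) ^ b / (w - u) := Real.rpow_sub_one hU.ne' b
  rw [hdy2, hdu, hdw, hZ u y w, e1, e2, e3, e4, e5, ha, hb, hc]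
  have h1 : y - u ≠ 0 := hX.ne'
  have h2 : w - y ≠ 0 := hW.ne'
  have h3 : w - u ≠ 0 := hU.ne'
  have h4 : u - y ≠ 0 := by intro h; apply h1; linarith
  have h5 : κs ≠ 0 := hκs.ne'
  field_simp
  ring
end
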